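/- Let G be a regular graph with a proper c-coloring into classes of equal size m such that every vertex has exactly ν neighbors in each color class other than its own (a ν-equitable c-coloring). If ν ≥ m(c-1)/c, then G is Hoffman colorable with χ(G) = c, i.e., c = 1 - λ_max(G)/λ_min(G). -/

import Mathlib

open Matrix Finset BigOperators Real

noncomputable def lamMax {n : Type*} [Fintype n] [DecidableEq n] {A : Matrix n n ℝ}
    (hA : A.IsHermitian) : ℝ := ⨆ i, hA.eigenvalues i

noncomputable def lamMin {n : Type*} [Fintype n] [DecidableEq n] {A : Matrix n n ℝ}
    (hA : A.IsHermitian) : ℝ := ⨅ i, hA.eigenvalues i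

theorem adjHerm {V : Type*} [Fintype V] [DecidableEq V] (G : SimpleGraph V) [DecidableRel G.Adj] :
    (G.adjMatrix ℝ).IsHermitian := by
  ext i j
  simp [Matrix.conjTranspose_apply, SimpleGraph.adjMatrix_apply, SimpleGraph.adj_comm]


lemma eig_mem {n : Type*} [Fintype n] [DecidableEq n] {A : Matrix n n ℝ}
    (hA : A.IsHermitian) {μ : ℝ} {x : n → ℝ} (hx : x ≠ 0) (h : A *ᵥ x = μ • x) :
    ∃ i, hA.eigenvalues i = μ := by
  by_contra hcon
  push_neg at hcon
  apply hx
  have hAT : Aᵀ = A := by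
    have := hA
    rwa [Matrix.IsHermitian, conjTranspose_eq_transpose_of_trivial] at this
  set B := hA.eigenvectorBasis with hB
  have key : ∀ i, ⇑(B i) ⬝ᵥ x = 0 := by
    intro i
    have h1 : ⇑(B i) ⬝ᵥ (A *ᵥ x) = hA.eigenvalues i * (⇑(B i) ⬝ᵥ x) := by
      rw [dotProduct_mulVec, ← mulVec_transpose, hAT, hA.mulVec_eigenvectorBasis i,
        smul_dotProduct, smul_eq_mul]
    rw [h, dotProduct_smul, smul_eq_mul] at h1
    have h2 : (hA.eigenvalues i - μ) * (⇑(B i) ⬝ᵥ x) = 0 := by ring_nf; linarith [h1]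
    rcases mul_eq_zero.mp h2 with h3 | h3
    · exact absurd (by linarith [sub_eq_zero.mp h3] : hA.eigenvalues i = μ) (hcon i)
    · exact h3
  have hy : (WithLp.toLp 2 x : EuclideanSpace ℝ n) = 0 := by
    have h0 : ∀ i, B.repr (WithLp.toLp 2 x) i = 0 := by
      intro i
      rw [B.repr_apply_apply, PiLp.inner_apply]
      simpa [dotProduct, mul_comm] using key i
    have : B.repr (WithLp.toLp 2 x) = 0 := by ext i; exact h0 i
    simpa using B.repr.map_eq_zero_iff.mp this
  funext i
  exact congrArg (fun y : EuclideanSpace ℝ n => y i) hy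


lemma quad_bound {V : Type*} [Fintype V] (P : V → V → Prop) [∀ u v, Decidable (P u v)]
    (hsymm : ∀ u v, P u v → P v u) (D : ℝ)
    (hdeg : ∀ u, ((univ.filter (fun v => P u v)).card : ℝ) ≤ D) (x : V → ℝ) :
    ∑ u, ∑ v ∈ univ.filter (fun v => P u v), x u * x v ≤ D * ∑ u, x u ^ 2 := by
  have step1 : ∑ u, ∑ v ∈ univ.filter (fun v => P u v), x u * x v
      ≤ ∑ u, ∑ v ∈ univ.filter (fun v => P u v), (x u ^ 2 + x v ^ 2) / 2 := by
    apply Finset.sum_le_sum; intro u _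
    apply Finset.sum_le_sum; intro v _
    nlinarith [sq_nonneg (x u - x v)]
  have swap : ∑ u, ∑ v ∈ univ.filter (fun v => P u v), x v ^ 2
      = ∑ v, ((univ.filter (fun u => P v u)).card : ℝ) * x v ^ 2 := by
    simp_rw [Finset.sum_filter]
    rw [Finset.sum_comm]
    congr 1; funext v
    rw [Finset.card_filter]
    push_cast
    rw [Finset.sum_mul]
    congr 1; funext u
    by_cases h : P u v
    · simp [h, hsymm u v h]
    · have h' : ¬ P v u := fun hh => h (hsymm v u hh)
      simp [h, h']
  have diag : ∑ u, ∑ v ∈ univ.filter (fun v => P u v), x u ^ 2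
      = ∑ u, ((univ.filter (fun v => P u v)).card : ℝ) * x u ^ 2 := by
    congr 1; funext u
    rw [Finset.sum_const, nsmul_eq_mul]
  have bound : ∀ u, ((univ.filter (fun v => P u v)).card : ℝ) * x u ^ 2 ≤ D * x u ^ 2 := by
    intro u
    exact mul_le_mul_of_nonneg_right (hdeg u) (sq_nonneg _)
  calc ∑ u, ∑ v ∈ univ.filter (fun v => P u v), x u * x v
      ≤ ∑ u, ∑ v ∈ univ.filter (fun v => P u v), (x u ^ 2 + x v ^ 2) / 2 := step1
    _ = (∑ u, ∑ v ∈ univ.filter (fun v => P u v), x u ^ 2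
        + ∑ u, ∑ v ∈ univ.filter (fun v => P u v), x v ^ 2) / 2 := by
        rw [← Finset.sum_add_distrib]
        rw [Finset.sum_div]
        congr 1; funext u
        rw [← Finset.sum_add_distrib, Finset.sum_div]
    _ = (∑ u, ((univ.filter (fun v => P u v)).card : ℝ) * x u ^ 2
        + ∑ v, ((univ.filter (fun u => P v u)).card : ℝ) * x v ^ 2) / 2 := by rw [diag, swap]
    _ ≤ (D * ∑ u, x u ^ 2 + D * ∑ u, x u ^ 2) / 2 := by
        apply div_le_div_of_nonneg_right ?_ (by norm_num)
        have h1 : ∑ u, ((univ.filter (fun v => P u v)).card : ℝ) * x u ^ 2 ≤ D * ∑ u, x u ^ 2 := by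
          rw [Finset.mul_sum]; exact Finset.sum_le_sum (fun u _ => bound u)
        exact add_le_add h1 h1
    _ = D * ∑ u, x u ^ 2 := by ring

lemma nbrsum {V : Type*} [Fintype V] (G : SimpleGraph V) [DecidableRel G.Adj]
    {c ν : ℕ} (C : G.Coloring (Fin c))
    (hequit : ∀ u : V, ∀ j : Fin c, j ≠ C u →
      (Finset.univ.filter (fun v => G.Adj u v ∧ C v = j)).card = ν)
    (u : V) (F : Fin c → ℝ) :
    ∑ v ∈ Finset.univ.filter (fun v => G.Adj u v), F (C v)
      = (ν : ℝ) * ((∑ j, F j) - F (C u)) := by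
  rw [← Finset.sum_fiberwise_of_maps_to (g := C) (t := Finset.univ)
    (fun v _ => Finset.mem_univ (C v))]
  have inner : ∀ j : Fin c, ∑ v ∈ (Finset.univ.filter (fun v => G.Adj u v)).filter
      (fun v => C v = j), F (C v) = (if j = C u then 0 else (ν:ℝ)) * F j := by
    intro j
    rw [Finset.sum_congr rfl (fun v hv => by rw [(Finset.mem_filter.mp hv).2])]
    rw [Finset.sum_const, nsmul_eq_mul]
    congr 1
    rw [Finset.filter_filter]
    by_cases hj : j = C u
    · subst hj
      rw [if_pos rfl]
      norm_cast
      rw [Finset.card_eq_zero, Finset.filter_eq_empty_iff]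
      intro v _
      rintro ⟨hadj, hcol⟩
      exact (C.valid hadj) hcol.symm
    · rw [if_neg hj, hequit u j hj]
  rw [Finset.sum_congr rfl (fun j _ => inner j)]
  have : ∀ j : Fin c, (if j = C u then 0 else (ν:ℝ)) * F j
      = (ν:ℝ) * F j - (if j = C u then (ν:ℝ) * F j else 0) := by
    intro j; split <;> ring
  rw [Finset.sum_congr rfl (fun j _ => this j), Finset.sum_sub_distrib,
    Finset.sum_ite_eq' Finset.univ (C u) (fun j => (ν:ℝ) * F j)]
  rw [if_pos (Finset.mem_univ (C u)), mul_sub, Finset.mul_sum]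


lemma card_nonadj {V : Type*} [Fintype V] (G : SimpleGraph V) [DecidableRel G.Adj]
    {c m ν : ℕ} (C : G.Coloring (Fin c))
    (hsize : ∀ i : Fin c, (Finset.univ.filter (fun v => C v = i)).card = m)
    (hequit : ∀ u : V, ∀ j : Fin c, j ≠ C u →
      (Finset.univ.filter (fun v => G.Adj u v ∧ C v = j)).card = ν)
    (u : V) (j : Fin c) (hj : j ≠ C u) :
    ν ≤ m ∧ (Finset.univ.filter (fun v => C v = j ∧ ¬ G.Adj u v)).card = m - ν := by
  have hsplit := Finset.card_filter_add_card_filter_not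
    (s := Finset.univ.filter (fun v => C v = j)) (p := fun v => G.Adj u v)
  rw [Finset.filter_filter, Finset.filter_filter, hsize j] at hsplit
  have h1 : (Finset.univ.filter fun v => C v = j ∧ G.Adj u v).card = ν := by
    rw [← hequit u j hj]
    congr 1
    ext v; simp [and_comm]
  rw [h1] at hsplit
  exact ⟨by omega, by omega⟩

lemma lower_bound {V : Type*} [Fintype V] [DecidableEq V] (G : SimpleGraph V)
    [DecidableRel G.Adj]
    (c m ν : ℕ) (hc : 2 ≤ c) (hm : 1 ≤ m)
    (C : G.Coloring (Fin c))
    (hsize : ∀ i : Fin c, (Finset.univ.filter (fun v => C v = i)).card = m)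
    (hequit : ∀ u : V, ∀ j : Fin c, j ≠ C u →
      (Finset.univ.filter (fun v => G.Adj u v ∧ C v = j)).card = ν)
    (hν : (m : ℝ) * ((c : ℝ) - 1) / (c : ℝ) ≤ (ν : ℝ)) (x : V → ℝ) :
    -(ν:ℝ) * (∑ v, x v ^ 2) ≤ x ⬝ᵥ (G.adjMatrix ℝ *ᵥ x) := by
  classical
  set A := G.adjMatrix ℝ with hA
  -- basic numeric facts
  have hc0 : (0:ℝ) < (c:ℝ) := by
    have : 0 < c := by omega
    exact_mod_cast this
  have hc1 : (1:ℝ) ≤ (c:ℝ) := by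
    have : 1 ≤ c := by omega
    exact_mod_cast this
  have hm0 : (0:ℝ) < (m:ℝ) := by
    have : 0 < m := hm
    exact_mod_cast this
  -- get a vertex
  have hVne : Nonempty V := by
    have h1 := hsize ⟨0, by omega⟩
    have h2 : (Finset.univ.filter (fun v => C v = (⟨0, by omega⟩ : Fin c))).Nonempty := by
      rw [← Finset.card_pos, h1]; omega
    exact ⟨h2.choose⟩
  have hnt : Nontrivial (Fin c) := Fin.nontrivial_iff_two_le.mpr hc
  have hνm : ν ≤ m := by
    obtain ⟨u⟩ := hVne
    obtain ⟨j, hj⟩ := exists_ne (C u)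
    exact (card_nonadj G C hsize hequit u j hj).1
  have hνm' : (ν:ℝ) ≤ (m:ℝ) := by exact_mod_cast hνm
  have hkey : ((c:ℝ) - 1) * ((m:ℝ) - (ν:ℝ)) ≤ (ν:ℝ) := by
    have h1 : (m:ℝ) * ((c:ℝ) - 1) ≤ (ν:ℝ) * (c:ℝ) := by
      rw [div_le_iff₀ hc0] at hν; linarith
    nlinarith
  -- decomposition
  set g : Fin c → ℝ := fun i => (∑ v ∈ univ.filter (fun v => C v = i), x v) / m with hg
  set w : V → ℝ := fun v => g (C v) with hw
  set z : V → ℝ := fun v => x v - w v with hz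
  set T : ℝ := ∑ i, g i with hT
  have fiber : ∀ F : V → ℝ, ∑ v, F v = ∑ i : Fin c, ∑ v ∈ univ.filter (fun v => C v = i), F v :=
    fun F => (Finset.sum_fiberwise_of_maps_to (fun v _ => Finset.mem_univ (C v)) F).symm
  have classconst : ∀ (i : Fin c) (F : Fin c → ℝ),
      ∑ v ∈ univ.filter (fun v => C v = i), F (C v) = (m:ℝ) * F i := by
    intro i F
    rw [Finset.sum_congr rfl (fun v hv => by rw [(Finset.mem_filter.mp hv).2]),
      Finset.sum_const, hsize i, nsmul_eq_mul]
  have zsum : ∀ i : Fin c, ∑ v ∈ univ.filter (fun v => C v = i), z v = 0 := by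
    intro i
    have h1 : ∑ v ∈ univ.filter (fun v => C v = i), z v
        = (∑ v ∈ univ.filter (fun v => C v = i), x v)
          - ∑ v ∈ univ.filter (fun v => C v = i), w v := by
      rw [← Finset.sum_sub_distrib]
    have h2 : ∑ v ∈ univ.filter (fun v => C v = i), w v = (m:ℝ) * g i := classconst i g
    rw [h1, h2, hg]
    field_simp
    ring
  have zsum_univ : ∑ v, z v = 0 := by
    rw [fiber z]; exact Finset.sum_eq_zero (fun i _ => zsum i)
  have mv : ∀ (y : V → ℝ) (u : V),
      (A *ᵥ y) u = ∑ v ∈ univ.filter (fun v => G.Adj u v), y v := by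
    intro y u
    rw [hA, SimpleGraph.adjMatrix_mulVec_apply, SimpleGraph.neighborFinset_eq_filter]
  have Aw : ∀ u, (A *ᵥ w) u = (ν:ℝ) * (T - g (C u)) := by
    intro u
    rw [mv w u]
    exact nbrsum G C hequit u g
  have Az : ∀ u, (A *ᵥ z) u
      = - ∑ v ∈ univ.filter (fun v => C v ≠ C u ∧ ¬ G.Adj u v), z v := by
    intro u
    have hpart : ∑ v ∈ univ.filter (fun v => G.Adj u v), z v
        + ∑ v ∈ univ.filter (fun v => C v ≠ C u ∧ ¬ G.Adj u v), z v
        + ∑ v ∈ univ.filter (fun v => C v = C u), z v = ∑ v, z v := by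
      rw [Finset.sum_filter, Finset.sum_filter, Finset.sum_filter,
        ← Finset.sum_add_distrib, ← Finset.sum_add_distrib]
      apply Finset.sum_congr rfl
      intro v _
      by_cases h1 : C v = C u
      · have h2 : ¬ G.Adj u v := fun h => (C.valid h) h1.symm
        simp [h1, h2]
      · by_cases h2 : G.Adj u v <;> simp [h1, h2]
    rw [mv z u]
    have h3 := zsum (C u)
    rw [zsum_univ, h3] at hpart
    linarith
  -- cross terms vanish
  have zAw : z ⬝ᵥ (A *ᵥ w) = 0 := by
    show ∑ v, z v * (A *ᵥ w) v = 0
    rw [Finset.sum_congr rfl (fun v _ => by rw [Aw v])]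
    rw [fiber (fun v => z v * ((ν:ℝ) * (T - g (C v))))]
    apply Finset.sum_eq_zero
    intro i _
    have h1 : ∑ v ∈ univ.filter (fun v => C v = i), z v * ((ν:ℝ) * (T - g (C v)))
        = (∑ v ∈ univ.filter (fun v => C v = i), z v) * ((ν:ℝ) * (T - g i)) := by
      rw [Finset.sum_mul]
      apply Finset.sum_congr rfl
      intro v hv
      rw [(Finset.mem_filter.mp hv).2]
    rw [h1, zsum i, zero_mul]
  have vecmul : ∀ y : V → ℝ, y ᵥ* A = A *ᵥ y := by
    intro y
    funext u
    rw [hA, SimpleGraph.adjMatrix_vecMul_apply, SimpleGraph.adjMatrix_mulVec_apply]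
  have wAz : w ⬝ᵥ (A *ᵥ z) = 0 := by
    rw [Matrix.dotProduct_mulVec, vecmul w, dotProduct_comm]
    exact zAw
  -- w-part
  have sumC : ∀ F : Fin c → ℝ, ∑ v, F (C v) = ∑ i, (m:ℝ) * F i := by
    intro F
    rw [fiber (fun v => F (C v))]
    exact Finset.sum_congr rfl (fun i _ => classconst i F)
  have wAw : w ⬝ᵥ (A *ᵥ w) = (ν:ℝ) * m * (T^2 - ∑ i, g i ^2) := by
    show ∑ v, w v * (A *ᵥ w) v = _
    rw [Finset.sum_congr rfl (fun v _ => by rw [Aw v])]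
    have h1 : ∑ v, g (C v) * ((ν:ℝ) * (T - g (C v)))
        = ∑ i, (m:ℝ) * (g i * ((ν:ℝ) * (T - g i))) := sumC (fun i => g i * ((ν:ℝ) * (T - g i)))
    rw [h1]
    have h2 : ∀ i : Fin c, (m:ℝ) * (g i * ((ν:ℝ) * (T - g i)))
        = ((ν:ℝ) * m * T) * g i - (ν:ℝ) * m * (g i ^ 2) := by intro i; ring
    rw [Finset.sum_congr rfl (fun i _ => h2 i), Finset.sum_sub_distrib, ← Finset.mul_sum,
      ← Finset.mul_sum, ← hT]
    ring
  have wnorm : ∑ v, w v ^ 2 = (m:ℝ) * ∑ i, g i ^ 2 := by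
    have := sumC (fun i => g i ^ 2)
    rw [Finset.mul_sum]
    exact this
  have wz : ∑ v, w v * z v = 0 := by
    rw [fiber (fun v => w v * z v)]
    apply Finset.sum_eq_zero
    intro i _
    have h1 : ∑ v ∈ univ.filter (fun v => C v = i), w v * z v
        = g i * ∑ v ∈ univ.filter (fun v => C v = i), z v := by
      rw [Finset.mul_sum]
      apply Finset.sum_congr rfl
      intro v hv
      show g (C v) * z v = _
      rw [(Finset.mem_filter.mp hv).2]
    rw [h1, zsum i, mul_zero]
  have xnorm : ∑ v, x v ^ 2 = (m:ℝ) * (∑ i, g i ^ 2) + ∑ v, z v ^ 2 := by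
    have h1 : ∀ v, x v ^ 2 = w v ^ 2 + 2 * (w v * z v) + z v ^ 2 := by
      intro v
      have : x v = w v + z v := by rw [hz]; ring
      rw [this]; ring
    rw [Finset.sum_congr rfl (fun v _ => h1 v), Finset.sum_add_distrib, Finset.sum_add_distrib,
      ← Finset.mul_sum]
    rw [wz, wnorm]
    ring
  -- z-part
  have cardH : ∀ u, (univ.filter (fun v => C v ≠ C u ∧ ¬ G.Adj u v)).card
      = (c - 1) * (m - ν) := by
    intro u
    rw [Finset.card_eq_sum_card_fiberwise (f := C) (t := univ) (fun v _ => Finset.mem_univ _)]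
    have h1 : ∀ j : Fin c, ((univ.filter (fun v => C v ≠ C u ∧ ¬ G.Adj u v)).filter
        (fun v => C v = j)).card = if j = C u then 0 else m - ν := by
      intro j
      rw [Finset.filter_filter]
      by_cases hj : j = C u
      · rw [if_pos hj]
        rw [Finset.card_eq_zero, Finset.filter_eq_empty_iff]
        intro v _
        rintro ⟨⟨h1, _⟩, h2⟩
        exact h1 (hj ▸ h2)
      · rw [if_neg hj, ← (card_nonadj G C hsize hequit u j hj).2]
        congr 1
        ext v
        simp only [Finset.mem_filter, Finset.mem_univ, true_and]
        constructor
        · rintro ⟨⟨_, hna⟩, hcv⟩; exact ⟨hcv, hna⟩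
        · rintro ⟨hcv, hna⟩; exact ⟨⟨hcv ▸ hj, hna⟩, hcv⟩
    rw [Finset.sum_congr rfl (fun j _ => h1 j)]
    rw [← Finset.add_sum_erase _ _ (Finset.mem_univ (C u)), if_pos rfl, zero_add]
    have h2 : ∀ j ∈ univ.erase (C u), (if j = C u then 0 else m - ν) = m - ν := by
      intro j hj
      rw [if_neg (Finset.mem_erase.mp hj).1]
    rw [Finset.sum_congr rfl h2, Finset.sum_const, Finset.card_erase_of_mem (Finset.mem_univ _),
      Finset.card_univ, Fintype.card_fin, smul_eq_mul]
  have zAz : -(ν:ℝ) * ∑ v, z v ^ 2 ≤ z ⬝ᵥ (A *ᵥ z) := by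
    have hQ : ∑ u, ∑ v ∈ univ.filter (fun v => C v ≠ C u ∧ ¬ G.Adj u v), z u * z v
        ≤ (ν:ℝ) * ∑ u, z u ^ 2 := by
      apply quad_bound (fun u v => C v ≠ C u ∧ ¬ G.Adj u v)
      · rintro u v ⟨h1, h2⟩
        exact ⟨h1.symm, fun h => h2 h.symm⟩
      · intro u
        rw [cardH u]
        push_cast [Nat.cast_sub hνm, Nat.cast_sub (by omega : 1 ≤ c)]
        exact hkey
    have h1 : z ⬝ᵥ (A *ᵥ z)
        = - ∑ u, ∑ v ∈ univ.filter (fun v => C v ≠ C u ∧ ¬ G.Adj u v), z u * z v := by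
      show ∑ u, z u * (A *ᵥ z) u = _
      have hcong : ∀ u : V, z u * (A *ᵥ z) u
          = -(∑ v ∈ univ.filter (fun v => C v ≠ C u ∧ ¬ G.Adj u v), z u * z v) := by
        intro u
        rw [Az u, mul_neg, Finset.mul_sum]
      rw [Finset.sum_congr rfl (fun u _ => hcong u), Finset.sum_neg_distrib]
    rw [h1]
    linarith
  -- combine
  have hx' : x = w + z := by
    funext v
    show x v = w v + z v
    rw [hz]; ring
  have expand : x ⬝ᵥ (A *ᵥ x)
      = w ⬝ᵥ (A *ᵥ w) + w ⬝ᵥ (A *ᵥ z) + (z ⬝ᵥ (A *ᵥ w) + z ⬝ᵥ (A *ᵥ z)) := by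
    rw [hx', Matrix.mulVec_add, dotProduct_add, add_dotProduct,
      add_dotProduct]
    ring
  rw [expand, wAz, zAw, wAw, xnorm]
  have hT2 : 0 ≤ (ν:ℝ) * m * T^2 := by positivity
  nlinarith [zAz]


lemma eig_bound {n : Type*} [Fintype n] [DecidableEq n] {A : Matrix n n ℝ} (hA : A.IsHermitian)
    {lo hi : ℝ} (hlo : ∀ x : n → ℝ, lo * (∑ v, x v ^ 2) ≤ x ⬝ᵥ (A *ᵥ x))
    (hhi : ∀ x : n → ℝ, x ⬝ᵥ (A *ᵥ x) ≤ hi * (∑ v, x v ^ 2)) (i : n) :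
    lo ≤ hA.eigenvalues i ∧ hA.eigenvalues i ≤ hi := by
  have h1 := hA.eigenvalues_eq i
  set b : n → ℝ := ⇑(hA.eigenvectorBasis i) with hb
  have h2 : hA.eigenvalues i = b ⬝ᵥ (A *ᵥ b) := by simpa using h1
  have h3 : ∑ v, b v ^ 2 = 1 := by
    have hn := hA.eigenvectorBasis.orthonormal.1 i
    rw [EuclideanSpace.norm_eq] at hn
    have h4 := Real.sqrt_eq_one.mp hn
    simpa [Real.norm_eq_abs, sq_abs] using h4
  constructor
  · have := hlo b; rw [h3, mul_one] at this; linarith [h2 ▸ this]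
  · have := hhi b; rw [h3, mul_one] at this; linarith [h2 ▸ this]

lemma card_deg {V : Type*} [Fintype V] (G : SimpleGraph V) [DecidableRel G.Adj]
    {c ν : ℕ} (C : G.Coloring (Fin c))
    (hequit : ∀ u : V, ∀ j : Fin c, j ≠ C u →
      (Finset.univ.filter (fun v => G.Adj u v ∧ C v = j)).card = ν)
    (u : V) :
    (Finset.univ.filter (fun v => G.Adj u v)).card = (c - 1) * ν := by
  classical
  rw [Finset.card_eq_sum_card_fiberwise (f := C) (t := univ) (fun v _ => Finset.mem_univ _)]
  have h1 : ∀ j : Fin c, ((univ.filter (fun v => G.Adj u v)).filter (fun v => C v = j)).card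
      = if j = C u then 0 else ν := by
    intro j
    rw [Finset.filter_filter]
    by_cases hj : j = C u
    · rw [if_pos hj, Finset.card_eq_zero, Finset.filter_eq_empty_iff]
      intro v _
      rintro ⟨hadj, hcol⟩
      exact (C.valid hadj) (hj ▸ hcol).symm
    · rw [if_neg hj, hequit u j hj]
  rw [Finset.sum_congr rfl (fun j _ => h1 j),
    ← Finset.add_sum_erase _ _ (Finset.mem_univ (C u)), if_pos rfl, zero_add]
  have h2 : ∀ j ∈ univ.erase (C u), (if j = C u then 0 else ν) = ν := by
    intro j hj
    rw [if_neg (Finset.mem_erase.mp hj).1]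
  rw [Finset.sum_congr rfl h2, Finset.sum_const, Finset.card_erase_of_mem (Finset.mem_univ _),
    Finset.card_univ, Fintype.card_fin, smul_eq_mul]

lemma upper_bound {V : Type*} [Fintype V] [DecidableEq V] (G : SimpleGraph V)
    [DecidableRel G.Adj]
    (c ν : ℕ) (hc : 2 ≤ c)
    (C : G.Coloring (Fin c))
    (hequit : ∀ u : V, ∀ j : Fin c, j ≠ C u →
      (Finset.univ.filter (fun v => G.Adj u v ∧ C v = j)).card = ν) (x : V → ℝ) :
    x ⬝ᵥ (G.adjMatrix ℝ *ᵥ x) ≤ ((c:ℝ) - 1) * (ν:ℝ) * (∑ v, x v ^ 2) := by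
  classical
  have mv : ∀ u : V, (G.adjMatrix ℝ *ᵥ x) u = ∑ v ∈ univ.filter (fun v => G.Adj u v), x v := by
    intro u
    rw [SimpleGraph.adjMatrix_mulVec_apply, SimpleGraph.neighborFinset_eq_filter]
  have h1 : x ⬝ᵥ (G.adjMatrix ℝ *ᵥ x)
      = ∑ u, ∑ v ∈ univ.filter (fun v => G.Adj u v), x u * x v := by
    show ∑ u, x u * (G.adjMatrix ℝ *ᵥ x) u = _
    exact Finset.sum_congr rfl (fun u _ => by rw [mv u, Finset.mul_sum])
  rw [h1]
  apply quad_bound (fun u v => G.Adj u v) (fun u v h => h.symm)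
  intro u
  rw [card_deg G C hequit u]
  push_cast [Nat.cast_sub (by omega : 1 ≤ c)]
  exact le_rfl

lemma exists_clique {V : Type*} [Fintype V] [DecidableEq V] (G : SimpleGraph V)
    [DecidableRel G.Adj]
    (c m ν : ℕ) (hc : 2 ≤ c) (hm : 1 ≤ m)
    (C : G.Coloring (Fin c))
    (hsize : ∀ i : Fin c, (Finset.univ.filter (fun v => C v = i)).card = m)
    (hequit : ∀ u : V, ∀ j : Fin c, j ≠ C u →
      (Finset.univ.filter (fun v => G.Adj u v ∧ C v = j)).card = ν)
    (hν : (m : ℝ) * ((c : ℝ) - 1) / (c : ℝ) ≤ (ν : ℝ)) :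
    ∃ T : Finset V, G.IsClique ↑T ∧ T.card = c := by
  classical
  have hc0 : (0:ℝ) < (c:ℝ) := by
    have : 0 < c := by omega
    exact_mod_cast this
  -- ν ≤ m
  have hVne : Nonempty V := by
    have h1 := hsize ⟨0, by omega⟩
    have h2 : (Finset.univ.filter (fun v => C v = (⟨0, by omega⟩ : Fin c))).Nonempty := by
      rw [← Finset.card_pos, h1]; omega
    exact ⟨h2.choose⟩
  have hnt : Nontrivial (Fin c) := Fin.nontrivial_iff_two_le.mpr hc
  have hνm : ν ≤ m := by
    obtain ⟨u⟩ := hVne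
    obtain ⟨j, hj⟩ := exists_ne (C u)
    exact (card_nonadj G C hsize hequit u j hj).1
  -- (c-1)*(m-ν) ≤ ν  as naturals
  have hkeyN : (c - 1) * (m - ν) ≤ ν := by
    have hkey : ((c:ℝ) - 1) * ((m:ℝ) - (ν:ℝ)) ≤ (ν:ℝ) := by
      have h1 : (m:ℝ) * ((c:ℝ) - 1) ≤ (ν:ℝ) * (c:ℝ) := by
        rw [div_le_iff₀ hc0] at hν; linarith
      nlinarith
    have : (((c - 1) * (m - ν) : ℕ) : ℝ) ≤ ((ν:ℕ) : ℝ) := by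
      push_cast [Nat.cast_sub (by omega : 1 ≤ c), Nat.cast_sub hνm]
      exact hkey
    exact_mod_cast this
  have main : ∀ k : ℕ, k ≤ c →
      ∃ T : Finset V, G.IsClique ↑T ∧ T.card = k ∧ ∀ v ∈ T, ((C v : Fin c) : ℕ) < k := by
    intro k
    induction k with
    | zero => exact fun _ => ⟨∅, by simp, by simp, by simp⟩
    | succ k ih =>
      intro hk1
      obtain ⟨T, hT, hTcard, hTcol⟩ := ih (by omega)
      have hkc : k < c := by omega
      set j : Fin c := ⟨k, hkc⟩ with hj
      have hjCu : ∀ u ∈ T, j ≠ C u := by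
        intro u hu heq
        have := hTcol u hu
        rw [← heq] at this
        simp [hj] at this
      set B := T.biUnion (fun u => univ.filter (fun v => C v = j ∧ ¬ G.Adj u v)) with hB
      have hBcard : B.card ≤ k * (m - ν) := by
        calc B.card ≤ ∑ u ∈ T, (univ.filter (fun v => C v = j ∧ ¬ G.Adj u v)).card :=
              Finset.card_biUnion_le
          _ = ∑ _u ∈ T, (m - ν) := Finset.sum_congr rfl
              (fun u hu => (card_nonadj G C hsize hequit u j (hjCu u hu)).2)
          _ = k * (m - ν) := by rw [Finset.sum_const, hTcard, smul_eq_mul]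
      have hlt : k * (m - ν) < m := by
        rcases Nat.lt_or_ge ν m with hlt' | hge'
        · have h2 : k * (m - ν) ≤ (c - 1) * (m - ν) :=
            Nat.mul_le_mul_right _ (by omega)
          omega
        · have h0 : m - ν = 0 := by omega
          rw [h0, Nat.mul_zero]
          omega
      have hex : ∃ v, C v = j ∧ v ∉ B := by
        by_contra h
        push_neg at h
        have hsub : univ.filter (fun v => C v = j) ⊆ B := by
          intro v hv
          exact h v (Finset.mem_filter.mp hv).2
        have := Finset.card_le_card hsub
        rw [hsize j] at this
        omega
      obtain ⟨v, hvj, hvB⟩ := hex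
      have hvadj : ∀ u ∈ T, G.Adj u v := by
        intro u hu
        by_contra hna
        exact hvB (Finset.mem_biUnion.mpr ⟨u, hu,
          Finset.mem_filter.mpr ⟨Finset.mem_univ v, hvj, hna⟩⟩)
      have hvT : v ∉ T := by
        intro hv
        have h1 := hTcol v hv
        rw [hvj] at h1
        simp [hj] at h1
      refine ⟨insert v T, ?_, ?_, ?_⟩
      · rw [Finset.coe_insert]
        apply SimpleGraph.IsClique.insert hT
        intro u hu _
        exact (hvadj u hu).symm
      · rw [Finset.card_insert_of_notMem hvT, hTcard]
      · intro u hu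
        rcases Finset.mem_insert.mp hu with rfl | hu'
        · rw [hvj]
          simp [hj]
        · exact Nat.lt_trans (hTcol u hu') (Nat.lt_succ_self k)
  obtain ⟨T, h1, h2, _⟩ := main c le_rfl
  exact ⟨T, h1, h2⟩

/-- a regular graph with a ν-equitable c-coloring (classes of size m, every
vertex with exactly ν neighbors in each other class) such that ν ≥ m(c-1)/c is Hoffman
colorable with χ(G) = c. -/
theorem stmt16 {V : Type*} [Fintype V] [DecidableEq V] (G : SimpleGraph V)
    [DecidableRel G.Adj]
    (c m ν : ℕ) (hc : 2 ≤ c) (hm : 1 ≤ m)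
    (C : G.Coloring (Fin c))
    (hsize : ∀ i : Fin c, (Finset.univ.filter (fun v => C v = i)).card = m)
    (hequit : ∀ u : V, ∀ j : Fin c, j ≠ C u →
      (Finset.univ.filter (fun v => G.Adj u v ∧ C v = j)).card = ν)
    (hν : (m : ℝ) * ((c : ℝ) - 1) / (c : ℝ) ≤ (ν : ℝ)) :
    G.chromaticNumber = c ∧
    (c : ℝ) = 1 - lamMax (adjHerm G) / lamMin (adjHerm G) := by
  classical
  have hc0 : (0:ℝ) < (c:ℝ) := by
    have : 0 < c := by omega
    exact_mod_cast this
  have hm0 : (0:ℝ) < (m:ℝ) := by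
    have : 0 < m := hm
    exact_mod_cast this
  have hν0 : (0:ℝ) < (ν:ℝ) := by
    have h1 : (0:ℝ) < (m:ℝ) * ((c:ℝ) - 1) / (c:ℝ) := by
      apply div_pos
      · apply mul_pos hm0
        have : (2:ℝ) ≤ (c:ℝ) := by exact_mod_cast hc
        linarith
      · exact hc0
    linarith
  set i0 : Fin c := ⟨0, by omega⟩ with hi0def
  have hclass0 : (Finset.univ.filter (fun v => C v = i0)).Nonempty := by
    rw [← Finset.card_pos, hsize i0]; omega
  obtain ⟨v0, hv0⟩ := hclass0
  have hv0c : C v0 = i0 := (Finset.mem_filter.mp hv0).2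
  haveI hVne : Nonempty V := ⟨v0⟩
  -- Part 1 : chromatic number
  have hpart1 : G.chromaticNumber = c := by
    have hcol : G.Colorable c := by
      have := C.colorable
      rwa [Fintype.card_fin] at this
    have hle : G.chromaticNumber ≤ c := hcol.chromaticNumber_le
    obtain ⟨T, hT, hTcard⟩ := exists_clique G c m ν hc hm C hsize hequit hν
    have hclique : ¬ G.CliqueFree c := by
      intro h
      exact h T ⟨hT, hTcard⟩
    have hge : (c : ℕ∞) ≤ G.chromaticNumber := by
      by_contra h
      push_neg at h
      exact hclique (SimpleGraph.cliqueFree_of_chromaticNumber_lt h)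
    exact le_antisymm hle hge
  refine ⟨hpart1, ?_⟩
  -- Part 2 : spectral
  set A := G.adjMatrix ℝ with hA
  have mv : ∀ (y : V → ℝ) (u : V),
      (A *ᵥ y) u = ∑ v ∈ univ.filter (fun v => G.Adj u v), y v := by
    intro y u
    rw [hA, SimpleGraph.adjMatrix_mulVec_apply, SimpleGraph.neighborFinset_eq_filter]
  -- eigenvector for (c-1)ν : all ones
  have eigOne : A *ᵥ (fun _ => (1:ℝ)) = (((c:ℝ) - 1) * (ν:ℝ)) • (fun _ => (1:ℝ)) := by
    funext u
    rw [mv (fun _ => (1:ℝ)) u]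
    have h1 := nbrsum G C hequit u (fun _ => (1:ℝ))
    rw [h1]
    simp [Finset.card_univ]
    ring
  have honene : (fun _ : V => (1:ℝ)) ≠ 0 := by
    intro h
    have := congrFun h v0
    simp at this
  -- eigenvector for -ν
  set F : Fin c → ℝ := fun j => if j = i0 then (c:ℝ) - 1 else -1 with hF
  set f : V → ℝ := fun v => F (C v) with hf
  have hFsum : ∑ j, F j = 0 := by
    rw [← Finset.add_sum_erase _ _ (Finset.mem_univ i0)]
    have h1 : F i0 = (c:ℝ) - 1 := by rw [hF]; simp
    have h2 : ∀ j ∈ univ.erase i0, F j = -1 := by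
      intro j hj
      rw [hF]
      simp only
      rw [if_neg (Finset.mem_erase.mp hj).1]
    rw [h1, Finset.sum_congr rfl h2, Finset.sum_const,
      Finset.card_erase_of_mem (Finset.mem_univ _), Finset.card_univ, Fintype.card_fin,
      nsmul_eq_mul]
    push_cast [Nat.cast_sub (by omega : 1 ≤ c)]
    ring
  have eigNeg : A *ᵥ f = (-(ν:ℝ)) • f := by
    funext u
    rw [mv f u]
    have h1 := nbrsum G C hequit u F
    rw [hf]
    simp only
    rw [h1, hFsum]
    simp
  have hfne : f ≠ 0 := by
    intro h
    have h1 := congrFun h v0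
    rw [hf] at h1
    simp only [hv0c] at h1
    rw [hF] at h1
    simp at h1
    have : (2:ℝ) ≤ (c:ℝ) := by exact_mod_cast hc
    linarith
  -- eigenvalue bounds
  have hlo : ∀ x : V → ℝ, -(ν:ℝ) * (∑ v, x v ^ 2) ≤ x ⬝ᵥ (A *ᵥ x) :=
    fun x => lower_bound G c m ν hc hm C hsize hequit hν x
  have hhi : ∀ x : V → ℝ, x ⬝ᵥ (A *ᵥ x) ≤ ((c:ℝ) - 1) * (ν:ℝ) * (∑ v, x v ^ 2) :=
    fun x => upper_bound G c ν hc C hequit x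
  have hbounds := fun i => eig_bound (adjHerm G) hlo hhi i
  obtain ⟨imax, himax⟩ := eig_mem (adjHerm G) honene eigOne
  obtain ⟨imin, himin⟩ := eig_mem (adjHerm G) hfne eigNeg
  have hmax : lamMax (adjHerm G) = ((c:ℝ) - 1) * (ν:ℝ) := by
    apply le_antisymm
    · exact ciSup_le (fun i => (hbounds i).2)
    · rw [← himax]
      exact le_ciSup (Set.finite_range _).bddAbove imax
  have hmin : lamMin (adjHerm G) = -(ν:ℝ) := by
    apply le_antisymm
    · rw [← himin]
      exact ciInf_le (Set.finite_range _).bddBelow imin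
    · exact le_ciInf (fun i => (hbounds i).1)
  rw [hmax, hmin]
  have hνne : (ν:ℝ) ≠ 0 := ne_of_gt hν0
  rw [div_neg, sub_neg_eq_add, mul_div_assoc, div_self hνne, mul_one]
  ring
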